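/- arXiv:0707.2862 — 5 statements merged into one kernel-verified Lean document; each statement's English description precedes it below -/
import Mathlib

section
/- For integers 1 ≤ t ≤ k-2, the polynomial R_t(x) = ∑_{j=0}^{t} (-1)^j C(k,j) ∏_{i=1}^{k-1} (x + k - 1 - j - (i-1) ) restricted to the product (x+k-1-j)(x+k-2-j)⋯(x+1-j) satisfies R_t(x) = (-1)^t C(k-1,t) (x+k-t-1)⋯(x+1)(x-1)⋯(x-t). -/
/-!
Write `k = t + 1 + a` and induct on `t` (with `a` varying). Passing from `t` to `t + 1` adds
the term `j = t + 1`; it and the closed form for `t` share the factor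
`∏ (x + a - i) · ∏ (x - 1 - i)`, and what remains is a linear identity in `x` between binomial
coefficients: Pascal's rule combined with absorption, `C(n, k+1) (k+1) = C(n, k) (n-k)`.
-/

open Finset

variable {R : Type*} [CommRing R]

lemma prod_range_succ_sub (y : R) (n : ℕ) :
    ∏ i ∈ range (n + 1), (y - i) = y * ∏ i ∈ range n, (y - 1 - i) := by
  rw [prod_range_succ', mul_comm]
  simp only [Nat.cast_add, Nat.cast_one, Nat.cast_zero, sub_zero, sub_sub, add_comm (1 : R)]

lemma prod_range_add_sub (y : R) (m n : ℕ) :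
    ∏ i ∈ range (m + n), (y - i) =
      (∏ i ∈ range m, (y - i)) * ∏ i ∈ range n, (y - m - i) := by
  rw [prod_range_add]
  simp only [Nat.cast_add, sub_sub]

lemma cast_choose_mul_sub_cast_choose_succ_mul (n k : ℕ) (x : R) :
    (n.choose k : R) * (x + (n - k : ℕ)) - ((n + 1).choose (k + 1) : R) * x
      = (n.choose (k + 1) : R) * (k + 1 - x) := by
  have absorb : (n.choose (k + 1) : R) * (k + 1) = n.choose k * (n - k : ℕ) := by
    simpa using congrArg (Nat.cast : ℕ → R) (Nat.choose_succ_right_eq n k)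
  rw [Nat.choose_succ_succ', Nat.cast_add]
  linear_combination -absorb

theorem sum_range_alternating_choose_mul_prod (t a : ℕ) (x : R) :
    ∑ j ∈ range (t + 1),
        (-1) ^ j * ((t + 1 + a).choose j : R) * ∏ i ∈ range (t + a), (x + (t + a : ℕ) - j - i)
      = (-1) ^ t * ((t + a).choose t : R) * (∏ i ∈ range a, (x + a - i)) *
          ∏ i ∈ range t, (x - 1 - i) := by
  induction t generalizing a with
  | zero => simp
  | succ t ih =>
    set Q := ∏ i ∈ range a, (x + a - i)
    set B := ∏ i ∈ range t, (x - 1 - i)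
    have hQ : ∏ i ∈ range (a + 1), (x + (a + 1 : ℕ) - i) = (x + a + 1) * Q := by
      rw [prod_range_succ_sub]
      push_cast
      exact congrArg₂ _ (by ring) (prod_congr rfl fun i _ => by ring)
    have hQB :
        ∏ i ∈ range (t + 1 + a), (x + (t + 1 + a : ℕ) - (t + 1 : ℕ) - i) = Q * (x * B) := by
      rw [add_comm, prod_range_add_sub, prod_range_succ_sub]
      push_cast
      exact congrArg₂ _ (prod_congr rfl fun i _ => by ring)
        (congrArg₂ _ (by ring) (prod_congr rfl fun i _ => by ring))
    have hcoeff := cast_choose_mul_sub_cast_choose_succ_mul (R := R) (t + 1 + a) t x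
    rw [show t + 1 + a - t = a + 1 by omega, show t + 1 + a + 1 = t + 1 + 1 + a by omega] at hcoeff
    have ih' := ih (a + 1)
    rw [show t + 1 + (a + 1) = t + 1 + 1 + a by omega, show t + (a + 1) = t + 1 + a by omega,
      hQ] at ih'
    rw [sum_range_succ, ih', hQB, prod_range_succ]
    push_cast at hcoeff
    linear_combination (-1) ^ t * Q * B * hcoeff

theorem stmt2_general (k t : ℕ) (ht2 : t + 2 ≤ k) (x : ℝ) :
    ∑ j ∈ Finset.range (t + 1),
        (-1 : ℝ) ^ j * (k.choose j) * ∏ i ∈ Finset.range (k - 1), (x + k - 1 - j - i)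
      = (-1 : ℝ) ^ t * ((k - 1).choose t) *
          (∏ i ∈ Finset.range (k - 1 - t), (x + k - t - 1 - i)) *
          ∏ i ∈ Finset.range t, (x - 1 - i) := by
  obtain ⟨a, rfl⟩ : ∃ a, k = t + 1 + a := ⟨k - (t + 1), by omega⟩
  rw [show t + 1 + a - 1 = t + a by omega, show t + a - t = a by omega]
  convert sum_range_alternating_choose_mul_prod t a x using 3
  all_goals exact prod_congr rfl fun i _ => by push_cast; ring

/-- For integers `1 ≤ t ≤ k-2`, the polynomial
`R_t(x) = ∑_{j=0}^{t} (-1)^j C(k,j) (x+k-1-j)(x+k-2-j)⋯(x+1-j)` satisfies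
`R_t(x) = (-1)^t C(k-1,t) (x+k-t-1)⋯(x+1)(x-1)⋯(x-t)`. -/
theorem stmt2 (k t : ℕ) (ht1 : 1 ≤ t) (ht2 : t + 2 ≤ k) (x : ℝ) :
    ∑ j ∈ Finset.range (t + 1),
        (-1 : ℝ) ^ j * (k.choose j) * ∏ i ∈ Finset.range (k - 1), (x + k - 1 - j - i)
      = (-1 : ℝ) ^ t * ((k - 1).choose t) *
          (∏ i ∈ Finset.range (k - 1 - t), (x + k - t - 1 - i)) *
          ∏ i ∈ Finset.range t, (x - 1 - i) :=
  stmt2_general k t ht2 x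
end

section
/- For a fixed integer k ≥ 2, the polynomial R_{k-1}(x) = ∑_{j=0}^{k-1} (-1)^j C(k,j) (x+k-1-j)(x+k-2-j)⋯(x+1-j) equals -(-1)^k (x-1)(x-2)⋯(x-k+1); in particular R_{k-1}(k-1) = 0. -/
/-!
With `P(t) = (t - 1)(t - 2)⋯(t - k + 1)`, the `j`-th summand is `(-1)^j C(k,j) P(x + k - j)`.
Extended to `j = k`, the sum becomes the `k`-th finite difference of `P`, which vanishes because
`deg P = k - 1 < k`; the added term is `(-1)^k P(x)`.
-/

open Finset Polynomial

theorem Polynomial.alternating_sum_range_choose_mul_eval_sub_eq_zero {R : Type*} [CommRing R]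
    {P : R[X]} {n : ℕ} (hP : P.natDegree < n) (x : R) :
    ∑ j ∈ range (n + 1), (-1) ^ j * n.choose j * P.eval (x - j) = 0 := by
  have hΔ := congr_fun (fwdDiff_iter_eq_zero_of_degree_lt hP) (x - n)
  rw [fwdDiff_iter_eq_sum_shift, Pi.zero_apply] at hΔ
  rw [← hΔ, ← sum_range_reflect]
  refine sum_congr rfl fun j hj => ?_
  have hjn : j ≤ n := Nat.lt_succ_iff.mp (mem_range.mp hj)
  rw [Nat.add_sub_cancel, Nat.choose_symm hjn, Nat.cast_sub hjn, zsmul_eq_mul, nsmul_one]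
  push_cast
  ring_nf

/-- For fixed `k ≥ 2`, the polynomial
`R_{k-1}(x) = ∑_{j=0}^{k-1} (-1)^j C(k,j) (x+k-1-j)⋯(x+1-j)` equals
`-(-1)^k (x-1)(x-2)⋯(x-k+1)`; in particular `R_{k-1}(k-1) = 0`. -/
theorem stmt3 (k : ℕ) (hk : 2 ≤ k) :
    (∀ x : ℝ,
      ∑ j ∈ Finset.range k,
          (-1 : ℝ) ^ j * (k.choose j) * ∏ i ∈ Finset.range (k - 1), (x + k - 1 - j - i)
        = -(-1 : ℝ) ^ k * ∏ i ∈ Finset.range (k - 1), (x - 1 - i)) ∧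
    ∑ j ∈ Finset.range k,
        (-1 : ℝ) ^ j * (k.choose j) *
          ∏ i ∈ Finset.range (k - 1), (((k : ℝ) - 1) + k - 1 - j - i) = 0 := by
  set P : ℝ[X] := ∏ i ∈ range (k - 1), (X - C ((i : ℝ) + 1))
  have hP : P.natDegree < k := by
    rw [natDegree_finsetProd_X_sub_C_eq_card, card_range]
    omega
  have hPeval (t : ℝ) : P.eval t = ∏ i ∈ range (k - 1), (t - 1 - i) := by
    simp only [P, eval_prod, eval_sub, eval_X, eval_C]
    exact prod_congr rfl fun i _ => by ring
  have hsum (x : ℝ) : ∑ j ∈ range k, (-1 : ℝ) ^ j * (k.choose j) *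
      ∏ i ∈ range (k - 1), (x + k - 1 - j - i)
        = -(-1 : ℝ) ^ k * ∏ i ∈ range (k - 1), (x - 1 - i) := by
    have h := alternating_sum_range_choose_mul_eval_sub_eq_zero hP (x + k)
    simp only [sum_range_succ, Nat.choose_self, Nat.cast_one, mul_one, hPeval,
      add_sub_cancel_right] at h
    rw [neg_mul, eq_neg_iff_add_eq_zero, ← h]
    congr 1
    refine sum_congr rfl fun j _ => ?_
    congr 1
    exact prod_congr rfl fun i _ => by ring
  refine ⟨hsum, ?_⟩
  rw [hsum, prod_eq_zero (mem_range.mpr (by omega : k - 2 < k - 1)), mul_zero]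
  push_cast [Nat.cast_sub hk]
  ring
end

section
/- In the Grassmann algebra Λ_{2n}, let s = ∑_{j=1}^n x̀_{2j-1} x̀_{2j} and let Δ_f = 4 ∑_{j=1}^n ∂_{x̀_{2j-1}} ∂_{x̀_{2j}} be the fermionic Laplace operator acting by (left) derivations on Λ_{2n}. Then for all integers j, l with 0 ≤ l ≤ n and 0 ≤ j ≤ n-l, one has Δ_f^j (s^{n-l}) = 4^j (-1)^j · ((n-l)!/(n-l-j)!) · ((l+j)!/l!) · s^{n-l-j}. -/
/-- The Grassmann algebra `Λ_{2n}`, realized as the Clifford algebra of the zero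
quadratic form on `ℝ^{2n}` (i.e. the exterior algebra). -/
abbrev Grassmann (n : ℕ) : Type :=
  CliffordAlgebra (0 : QuadraticForm ℝ (Fin (2 * n) → ℝ))

/-- The generator `x̀_i` of the Grassmann algebra. -/
noncomputable def grGen (n : ℕ) (i : Fin (2 * n)) : Grassmann n :=
  CliffordAlgebra.ι (0 : QuadraticForm ℝ (Fin (2 * n) → ℝ)) (Pi.single i 1)

/-- The left Grassmann partial derivative `∂_{x̀_i}`: the odd derivation with
`∂_{x̀_i}(x̀_j) = δ_{ij}`, given by left contraction with the `i`-th coordinate functional. -/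
noncomputable def grD (n : ℕ) (i : Fin (2 * n)) : Module.End ℝ (Grassmann n) :=
  CliffordAlgebra.contractLeft (Q := (0 : QuadraticForm ℝ (Fin (2 * n) → ℝ)))
    (LinearMap.proj i)

/-- `s = ∑_{j=1}^n x̀_{2j-1} x̀_{2j}` (0-based pairs `(2j, 2j+1)`). -/
noncomputable def grS (n : ℕ) : Grassmann n :=
  ∑ j : Fin n, grGen n ⟨2 * j.1, by have := j.isLt; omega⟩ *
    grGen n ⟨2 * j.1 + 1, by have := j.isLt; omega⟩

/-- The fermionic Laplace operator `Δ_f = 4 ∑_{j=1}^n ∂_{x̀_{2j-1}} ∂_{x̀_{2j}}`. -/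
noncomputable def grLapF (n : ℕ) : Module.End ℝ (Grassmann n) :=
  4 • ∑ j : Fin n, grD n ⟨2 * j.1, by have := j.isLt; omega⟩ ∘ₗ
    grD n ⟨2 * j.1 + 1, by have := j.isLt; omega⟩

/-!
Contraction `∂ᵢ` with a covector is an odd derivation of the exterior algebra, so it satisfies the
ordinary Leibniz rule against the even element `s = ∑ₖ x̀_{2k} x̀_{2k+1}`. Moreover `∂ᵢ s` is a
single generator, which commutes with `s`; hence `∂ᵢ (s^(m+1)) = (m+1) (∂ᵢ s) s^m`. Applying this
twice gives `Δ_f s^(m+1) = -4 (m+1) (n - m) s^m`: the term `n s^m` comes from `∂_{2k} x̀_{2k} = 1`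
for each of the `n` pairs, and `-m s^m` from `∑ₖ x̀_{2k} ∂_{2k}`, which counts the pairs in `s^m`.
Iterating `j` times produces the two falling factorials.
-/

theorem Nat.cast_descFactorial_eq_div {K : Type*} [Field K] [CharZero K] {n k : ℕ} (h : k ≤ n) :
    (n.descFactorial k : K) = n.factorial / (n - k).factorial := by
  rw [Nat.descFactorial_eq_div h, Nat.cast_div (Nat.factorial_dvd_factorial (Nat.sub_le n k))
    (Nat.cast_ne_zero.mpr (Nat.factorial_ne_zero _))]

theorem apply_pow_succ_of_leibniz {A : Type*} [Semiring A] (D : A → A) {s : A}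
    (hD : ∀ y, D (s * y) = D s * y + s * D y) (hs : Commute (D s) s) (m : ℕ) :
    D (s ^ (m + 1)) = (m + 1) • (D s * s ^ m) := by
  induction m with
  | zero => simp
  | succ m ih =>
    rw [pow_succ' s (m + 1), hD, ih, mul_smul_comm, ← mul_assoc, ← hs.eq, mul_assoc,
      ← pow_succ', succ_nsmul' _ (m + 1)]

namespace ExteriorAlgebra

variable {R M κ : Type*} [CommRing R] [AddCommGroup M] [Module R M]

theorem ι_mul_ι_anticomm (a b : M) : ι R a * ι R b = -(ι R b * ι R a) :=
  CliffordAlgebra.ι_mul_ι_comm_of_isOrtho (.all a b)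

theorem commute_ι_ι_mul_ι (v a b : M) : Commute (ι R v) (ι R a * ι R b) := by
  rw [commute_iff_eq, ← mul_assoc, ι_mul_ι_anticomm v a, neg_mul, mul_assoc,
    ι_mul_ι_anticomm v b, mul_neg, neg_neg, mul_assoc]

theorem contractLeft_ι_mul_ι_mul (d : Module.Dual R M) (a b : M) (y : ExteriorAlgebra R M) :
    CliffordAlgebra.contractLeft d (ι R a * ι R b * y) =
      CliffordAlgebra.contractLeft d (ι R a * ι R b) * y +
        ι R a * ι R b * CliffordAlgebra.contractLeft d y := by
  simp only [ι, mul_assoc, CliffordAlgebra.contractLeft_ι_mul, CliffordAlgebra.contractLeft_ι,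
    ← Algebra.smul_def, mul_sub, mul_smul_comm, sub_mul, smul_mul_assoc]
  abel

variable [Fintype κ]

def sumWedge (a b : κ → M) : ExteriorAlgebra R M :=
  ∑ k, ι R (a k) * ι R (b k)

theorem commute_ι_sumWedge (v : M) (a b : κ → M) : Commute (ι R v) (sumWedge a b) :=
  Commute.sum_right _ _ _ fun k _ => commute_ι_ι_mul_ι v (a k) (b k)

theorem contractLeft_sumWedge_mul (d : Module.Dual R M) (a b : κ → M) (y : ExteriorAlgebra R M) :
    CliffordAlgebra.contractLeft d (sumWedge a b * y) =
      CliffordAlgebra.contractLeft d (sumWedge a b) * y +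
        sumWedge a b * CliffordAlgebra.contractLeft d y := by
  simp only [sumWedge, Finset.sum_mul, map_sum, contractLeft_ι_mul_ι_mul, Finset.sum_add_distrib]

theorem contractLeft_sumWedge (d : Module.Dual R M) (a b : κ → M) :
    CliffordAlgebra.contractLeft d (sumWedge a b) = ι R (∑ k, (d (a k) • b k - d (b k) • a k)) := by
  simp only [sumWedge, map_sum, map_sub, map_smul]
  refine Finset.sum_congr rfl fun k _ => ?_
  simp only [ι, CliffordAlgebra.contractLeft_ι_mul, CliffordAlgebra.contractLeft_ι,
    Algebra.algebraMap_eq_smul_one, mul_smul_comm, mul_one]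

theorem contractLeft_sumWedge_pow_succ (d : Module.Dual R M) (a b : κ → M) (m : ℕ) :
    CliffordAlgebra.contractLeft d (sumWedge a b ^ (m + 1)) =
      (m + 1) • (CliffordAlgebra.contractLeft d (sumWedge a b) * sumWedge a b ^ m) :=
  apply_pow_succ_of_leibniz _ (contractLeft_sumWedge_mul d a b)
    (by rw [contractLeft_sumWedge]; exact commute_ι_sumWedge _ a b) m

end ExteriorAlgebra

namespace Grassmann

open ExteriorAlgebra

variable {n : ℕ}

def pairFst (k : Fin n) : Fin (2 * n) := ⟨2 * k.1, by omega⟩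

def pairSnd (k : Fin n) : Fin (2 * n) := ⟨2 * k.1 + 1, by omega⟩

@[simp]
theorem pairFst_inj {j k : Fin n} : pairFst j = pairFst k ↔ j = k := by
  simp [pairFst, Fin.ext_iff]

@[simp]
theorem pairSnd_inj {j k : Fin n} : pairSnd j = pairSnd k ↔ j = k := by
  simp [pairSnd, Fin.ext_iff]

@[simp]
theorem pairFst_ne_pairSnd (j k : Fin n) : pairFst j ≠ pairSnd k := by
  simp only [pairFst, pairSnd, ne_eq, Fin.ext_iff]
  omega

theorem grS_eq_sumWedge :
    grS n = sumWedge (fun k => Pi.single (pairFst k) 1) (fun k => Pi.single (pairSnd k) 1) :=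
  rfl

theorem grS_eq_sum : grS n = ∑ k, grGen n (pairFst k) * grGen n (pairSnd k) :=
  rfl

theorem grLapF_apply (x : Grassmann n) :
    grLapF n x = 4 • ∑ k, grD n (pairFst k) (grD n (pairSnd k) x) := by
  rw [grLapF, LinearMap.smul_apply, LinearMap.sum_apply]
  rfl

theorem grD_grGen_mul_self (i : Fin (2 * n)) (x : Grassmann n) :
    grD n i (grGen n i * x) = x - grGen n i * grD n i x := by
  simp [grD, grGen, CliffordAlgebra.contractLeft_ι_mul]

theorem grD_pairFst_grS (k : Fin n) : grD n (pairFst k) (grS n) = grGen n (pairSnd k) := by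
  simp [grD, grGen, grS_eq_sumWedge, contractLeft_sumWedge, Pi.single_apply]

theorem grD_pairSnd_grS (k : Fin n) : grD n (pairSnd k) (grS n) = -grGen n (pairFst k) := by
  simp [grD, grGen, grS_eq_sumWedge, contractLeft_sumWedge, Pi.single_apply]

theorem grD_grS_pow_succ (i : Fin (2 * n)) (m : ℕ) :
    grD n i (grS n ^ (m + 1)) = (m + 1) • (grD n i (grS n) * grS n ^ m) :=
  contractLeft_sumWedge_pow_succ _ _ _ m

theorem sum_grGen_mul_grD_grS_pow (m : ℕ) :
    ∑ k, grGen n (pairFst k) * grD n (pairFst k) (grS n ^ m) = m • grS n ^ m := by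
  cases m with
  | zero => simp [grD]
  | succ m =>
    simp only [grD_grS_pow_succ, grD_pairFst_grS, mul_smul_comm, ← Finset.smul_sum, ← mul_assoc,
      ← Finset.sum_mul]
    rw [← grS_eq_sum, ← pow_succ']

theorem grLapF_grS_pow_succ (m : ℕ) :
    grLapF n (grS n ^ (m + 1)) = ((-4 : ℝ) * (m + 1) * (n - m)) • grS n ^ m := by
  simp only [grLapF_apply, grD_grS_pow_succ, grD_pairSnd_grS, neg_mul, map_neg, map_nsmul,
    grD_grGen_mul_self, Finset.sum_neg_distrib, ← Finset.smul_sum, Finset.sum_sub_distrib,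
    sum_grGen_mul_grD_grS_pow, Finset.sum_const, Finset.card_univ, Fintype.card_fin]
  module

theorem grLapF_pow_grS_pow {l m j : ℕ} (hn : l + m = n) (hj : j ≤ m) :
    (grLapF n ^ j) (grS n ^ m) =
      ((-4 : ℝ) ^ j * m.descFactorial j * (l + j).descFactorial j) • grS n ^ (m - j) := by
  induction j with
  | zero => simp
  | succ j ih =>
    obtain ⟨r, hr⟩ : ∃ r, m - j = r + 1 := ⟨m - (j + 1), by omega⟩
    have hnr : (n : ℝ) - r = l + j + 1 := by
      rw [sub_eq_iff_eq_add]
      exact_mod_cast (by omega : n = l + j + 1 + r)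
    rw [pow_succ', Module.End.mul_apply, ih (by omega), map_smul, hr, grLapF_grS_pow_succ,
      smul_smul, Nat.descFactorial_succ, hr, ← add_assoc, Nat.succ_descFactorial_succ,
      show m - (j + 1) = r by omega, hnr]
    congr 1
    push_cast
    ring

end Grassmann

/-- For `0 ≤ l ≤ n` and `0 ≤ j ≤ n-l`,
`Δ_f^j (s^{n-l}) = 4^j (-1)^j ((n-l)!/(n-l-j)!) ((l+j)!/l!) s^{n-l-j}`. -/
theorem stmt6 (n : ℕ) :
    ∀ l j : ℕ, l ≤ n → j ≤ n - l →
      (grLapF n ^ j) (grS n ^ (n - l)) =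
        ((4 : ℝ) ^ j * (-1 : ℝ) ^ j *
            ((n - l).factorial / (n - l - j).factorial : ℝ) *
            ((l + j).factorial / l.factorial : ℝ)) • grS n ^ (n - l - j) := by
  intro l j hl hj
  rw [Grassmann.grLapF_pow_grS_pow (l := l) (by omega) hj, Nat.cast_descFactorial_eq_div hj,
    Nat.cast_descFactorial_eq_div (Nat.le_add_left j l), Nat.add_sub_cancel, ← mul_pow]
  norm_num
end

section
/- In the Grassmann algebra Λ_{2n} with s = ∑_{j=1}^n x̀_{2j-1} x̀_{2j} and Δ_f = 4 ∑_{j=1}^n ∂_{x̀_{2j-1}} ∂_{x̀_{2j}}, one has Δ_f(s^{k}) = -4 k (n - k + 1) s^{k-1} for 1 ≤ k ≤ n. -/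
open CliffordAlgebra

section aux
variable {R M : Type*} [CommRing R] [AddCommGroup M] [Module R M] {Q : QuadraticForm R M}

/-- Super-Leibniz rule for left contraction. -/
theorem contractLeft_mul' (d : Module.Dual R M) (u v : CliffordAlgebra Q) :
    contractLeft d (u * v) =
      contractLeft d u * v + involute u * contractLeft d v := by
  induction u using CliffordAlgebra.induction generalizing v with
  | algebraMap r =>
      rw [contractLeft_algebraMap_mul, contractLeft_algebraMap, zero_mul, zero_add,
        involute.commutes]
  | ι m =>
      rw [contractLeft_ι_mul, contractLeft_ι, involute_ι, Algebra.smul_def, sub_eq_add_neg,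
        neg_mul]
  | mul a b ha hb =>
      rw [mul_assoc, ha, hb, ha, map_mul, add_mul, mul_add, mul_assoc, mul_assoc, add_assoc,
        mul_assoc]
  | add a b ha hb =>
      rw [add_mul, map_add, ha, hb, map_add, map_add, add_mul, add_mul]
      abel
end aux



variable {n : ℕ}

lemma gen_anticomm (a b : Fin (2 * n)) :
    grGen n a * grGen n b = -(grGen n b * grGen n a) := by
  have h := CliffordAlgebra.ι_mul_ι_add_swap (Q := (0 : QuadraticForm ℝ (Fin (2 * n) → ℝ)))
    (Pi.single a 1) (Pi.single b 1)
  rw [eq_neg_iff_add_eq_zero]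
  unfold grGen
  rw [h]
  simp [QuadraticMap.polar]

lemma gen_comm_pair (a b c : Fin (2 * n)) :
    Commute (grGen n c) (grGen n a * grGen n b) := by
  unfold Commute SemiconjBy
  rw [← mul_assoc, gen_anticomm c a, neg_mul, mul_assoc, gen_anticomm c b, mul_neg, neg_neg,
    mul_assoc]

lemma gen_comm_grS (c : Fin (2 * n)) : Commute (grGen n c) (grS n) := by
  unfold grS
  exact Commute.sum_right _ _ _ fun j _ => gen_comm_pair _ _ _

lemma involute_grS : CliffordAlgebra.involute (grS n) = grS n := by
  unfold grS grGen
  simp [CliffordAlgebra.involute_ι]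

lemma grD_pair (i a b : Fin (2 * n)) :
    grD n i (grGen n a * grGen n b) =
      (Pi.single (M := fun _ => ℝ) a 1 i) • grGen n b - (Pi.single (M := fun _ => ℝ) b 1 i) • grGen n a := by
  unfold grD grGen
  rw [CliffordAlgebra.contractLeft_ι_mul, CliffordAlgebra.contractLeft_ι,
    ← Algebra.commutes, ← Algebra.smul_def]
  simp [LinearMap.proj_apply]

lemma grD_grS (i : Fin (2 * n)) :
    grD n i (grS n) = ∑ j : Fin n,
      ((Pi.single (M := fun _ => ℝ) (⟨2 * j.1, by have := j.isLt; omega⟩ : Fin (2*n)) 1 i) •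
          grGen n ⟨2 * j.1 + 1, by have := j.isLt; omega⟩ -
        (Pi.single (M := fun _ => ℝ) (⟨2 * j.1 + 1, by have := j.isLt; omega⟩ : Fin (2*n)) 1 i) •
          grGen n ⟨2 * j.1, by have := j.isLt; omega⟩) := by
  unfold grS
  rw [map_sum]
  exact Finset.sum_congr rfl fun j _ => grD_pair _ _ _

lemma grD_grS_even (j : Fin n) :
    grD n ⟨2 * j.1, by have := j.isLt; omega⟩ (grS n) =
      grGen n ⟨2 * j.1 + 1, by have := j.isLt; omega⟩ := by
  rw [grD_grS]
  rw [Finset.sum_eq_single_of_mem j (Finset.mem_univ j)]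
  · rw [Pi.single_apply, Pi.single_apply, if_pos rfl, if_neg (by simp [Fin.ext_iff])]
    simp
  · intro m _ hm
    rw [Pi.single_apply, Pi.single_apply,
      if_neg (by simp only [Fin.ext_iff]; have := Fin.val_ne_of_ne hm; omega),
      if_neg (by simp only [Fin.ext_iff]; omega)]
    simp

lemma grD_grS_odd (j : Fin n) :
    grD n ⟨2 * j.1 + 1, by have := j.isLt; omega⟩ (grS n) =
      -grGen n ⟨2 * j.1, by have := j.isLt; omega⟩ := by
  rw [grD_grS]
  rw [Finset.sum_eq_single_of_mem j (Finset.mem_univ j)]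
  · rw [Pi.single_apply, Pi.single_apply, if_pos rfl, if_neg (by simp [Fin.ext_iff])]
    simp
  · intro m _ hm
    rw [Pi.single_apply, Pi.single_apply,
      if_neg (by simp only [Fin.ext_iff]; have := Fin.val_ne_of_ne hm; omega),
      if_neg (by simp only [Fin.ext_iff]; have := Fin.val_ne_of_ne hm; omega)]
    simp

lemma grD_gen (i a : Fin (2 * n)) :
    grD n i (grGen n a) = algebraMap ℝ _ (Pi.single (M := fun _ => ℝ) a 1 i) := by
  unfold grD grGen
  rw [CliffordAlgebra.contractLeft_ι]
  rfl

lemma grD_pow (i : Fin (2 * n)) (hc : Commute (grD n i (grS n)) (grS n)) (m : ℕ) :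
    grD n i (grS n ^ (m + 1)) = (m + 1) • (grD n i (grS n) * grS n ^ m) := by
  induction m with
  | zero => simp
  | succ m ih =>
      have hmul : ∀ u v : Grassmann n, grD n i (u * v) =
          grD n i u * v + CliffordAlgebra.involute u * grD n i v :=
        fun u v => contractLeft_mul' _ u v
      rw [pow_succ' (grS n) (m + 1), hmul, involute_grS, ih, mul_smul_comm, ← mul_assoc,
        ← hc.eq, mul_assoc, ← pow_succ',
        succ_nsmul (grD n i (grS n) * grS n ^ (m + 1)) (m + 1),
        add_comm ((m + 1) • (grD n i (grS n) * grS n ^ (m + 1)))]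

lemma involute_gen (a : Fin (2 * n)) :
    CliffordAlgebra.involute (grGen n a) = -grGen n a := by
  unfold grGen; simp

lemma grD_one (i : Fin (2 * n)) : grD n i (1 : Grassmann n) = 0 :=
  CliffordAlgebra.contractLeft_one _ _

lemma sum_T (m : ℕ) :
    ∑ j : Fin n, grD n ⟨2 * j.1, by have := j.isLt; omega⟩
        (grD n ⟨2 * j.1 + 1, by have := j.isLt; omega⟩ (grS n ^ (m + 1))) =
      (((m : ℝ) + 1) * ((m : ℝ) - n)) • grS n ^ m := by
  have hmul : ∀ (i : Fin (2 * n)) (u v : Grassmann n), grD n i (u * v) =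
      grD n i u * v + CliffordAlgebra.involute u * grD n i v :=
    fun i u v => contractLeft_mul' _ u v
  have hcomm : ∀ (j : Fin n) (i : Fin (2 * n)), Commute (grD n i (grS n)) (grS n) := by
    intro j i
    rw [grD_grS]
    refine Commute.sum_left _ _ _ fun l _ => Commute.sub_left ?_ ?_ <;>
      exact (gen_comm_grS _).smul_left _
  have hT : ∀ j : Fin n,
      grD n ⟨2 * j.1, by have := j.isLt; omega⟩
        (grD n ⟨2 * j.1 + 1, by have := j.isLt; omega⟩ (grS n ^ (m + 1))) =
      (m + 1) • (-(grS n ^ m) +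
        grGen n ⟨2 * j.1, by have := j.isLt; omega⟩ *
          grD n ⟨2 * j.1, by have := j.isLt; omega⟩ (grS n ^ m)) := by
    intro j
    rw [grD_pow _ (hcomm j _) m, grD_grS_odd, map_nsmul, neg_mul, map_neg, hmul, grD_gen,
      involute_gen, Pi.single_apply, if_pos rfl, map_one, one_mul]
    simp only [neg_mul, neg_neg, neg_add]
  rw [Finset.sum_congr rfl fun j _ => hT j]
  cases m with
  | zero =>
      simp only [pow_zero, grD_one, mul_zero, add_zero, zero_nsmul, one_nsmul,
        Finset.sum_const, Finset.card_univ, Fintype.card_fin]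
      rw [← Nat.cast_smul_eq_nsmul ℝ]
      simp only [one_smul, smul_neg, ← neg_smul, zero_add, one_nsmul]
      congr 1
      push_cast
      ring
  | succ m' =>
      have hE : ∀ j : Fin n,
          grGen n ⟨2 * j.1, by have := j.isLt; omega⟩ *
            grD n ⟨2 * j.1, by have := j.isLt; omega⟩ (grS n ^ (m' + 1)) =
          (m' + 1) • (grGen n ⟨2 * j.1, by have := j.isLt; omega⟩ *
            grGen n ⟨2 * j.1 + 1, by have := j.isLt; omega⟩ * grS n ^ m') := by
        intro j
        rw [grD_pow _ (hcomm j _) m', grD_grS_even, mul_smul_comm, mul_assoc]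
      rw [Finset.sum_congr rfl fun j _ => by rw [hE j]]
      rw [← Finset.smul_sum, Finset.sum_add_distrib, Finset.sum_const, Finset.card_univ,
        Fintype.card_fin, ← Finset.smul_sum, ← Finset.sum_mul]
      rw [show (∑ j : Fin n, grGen n ⟨2 * j.1, by have := j.isLt; omega⟩ *
            grGen n ⟨2 * j.1 + 1, by have := j.isLt; omega⟩) = grS n from rfl]
      rw [← pow_succ']
      rw [← Nat.cast_smul_eq_nsmul ℝ (m' + 1 + 1), ← Nat.cast_smul_eq_nsmul ℝ n,
        ← Nat.cast_smul_eq_nsmul ℝ (m' + 1)]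
      rw [smul_neg, ← neg_smul, ← add_smul, smul_smul]
      congr 1
      push_cast
      ring


/-- For `1 ≤ k ≤ n`, `Δ_f(s^k) = -4 k (n - k + 1) s^{k-1}` in the Grassmann algebra. -/
theorem stmt7 (n k : ℕ) (hk1 : 1 ≤ k) (hkn : k ≤ n) :
    grLapF n (grS n ^ k) =
      ((-4 : ℝ) * k * ((n : ℝ) - k + 1)) • grS n ^ (k - 1) := by
  obtain ⟨m, rfl⟩ : ∃ m, k = m + 1 := ⟨k - 1, by omega⟩
  unfold grLapF
  rw [LinearMap.smul_apply, LinearMap.sum_apply]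
  simp only [LinearMap.coe_comp, Function.comp_apply]
  rw [sum_T m, ← Nat.cast_smul_eq_nsmul ℝ 4, smul_smul, Nat.add_sub_cancel]
  congr 1
  push_cast
  ring
end

section
/- Fix integers k ≥ 1 and n ≥ 0. The sequence a_l = 4^l (l+k-1)!/((n-l)! (k-1)!), 0 ≤ l ≤ n, satisfies ∑_{j=0}^{min(k,l)} a_{l-j} C(k,j) 4^j (-1)^j ((n-l+j)!/(n-l)!) (l!/(l-j)!) = 0 for all 1 ≤ l ≤ n, together with a_0 = 1/n!. -/
/-- The coefficients `a_l = 4^l (l+k-1)!/((n-l)! (k-1)!)` of the fundamental solution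
of `Δ^k` in superspace. -/
noncomputable def aCoef (k n l : ℕ) : ℚ :=
  4 ^ l * ((l + k - 1).factorial : ℚ) / (((n - l).factorial : ℚ) * ((k - 1).factorial : ℚ))

/-!
Writing `k = d + 1`, the `j`-th summand equals `4^l l!/(n-l)!` times
`(-1)^j C(d+1, j) C(d + l - j, d)`. The alternating sum of these is the coefficient of `X^l` in
`(1 - X)^(d+1) * ∑ₘ C(d+m, d) X^m = (1 - X)^(d+1) * (1 - X)^(-(d+1)) = 1`, hence vanishes for `l ≥ 1`.
-/

open Finset PowerSeries

theorem PowerSeries.coeff_one_sub_X_pow {R : Type*} [CommRing R] (k j : ℕ) :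
    coeff j ((1 - X : R⟦X⟧) ^ k) = (-1) ^ j * k.choose j := by
  have : (1 - X : R⟦X⟧) ^ k = rescale (-1) (binomialSeries R (k : ℤ)) := by
    rw [binomialSeries_nat, map_pow, map_add, map_one, rescale_X, map_neg, map_one, neg_one_mul,
      sub_eq_add_neg]
  rw [this, coeff_rescale, binomialSeries_coeff, Ring.choose_natCast, zsmul_eq_mul, mul_one,
    Int.cast_natCast]

theorem sum_range_neg_one_pow_mul_choose_mul_add_choose {R : Type*} [CommRing R] (d l : ℕ) :
    ∑ j ∈ range (l + 1), (-1 : R) ^ j * (d + 1).choose j * (d + (l - j)).choose d =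
      if l = 0 then 1 else 0 := by
  have h := congrArg (coeff (R := R) l) (mk_add_choose_mul_one_sub_pow_eq_one R d)
  rw [mul_comm, coeff_mul, Nat.sum_antidiagonal_eq_sum_range_succ_mk, coeff_one] at h
  simpa only [coeff_one_sub_X_pow, coeff_mk] using h

theorem sum_range_min_neg_one_pow_mul_choose_mul_add_choose_eq_zero {R : Type*} [CommRing R]
    (d l : ℕ) (hl : l ≠ 0) :
    ∑ j ∈ range (min (d + 1) l + 1), (-1 : R) ^ j * (d + 1).choose j * (d + (l - j)).choose d =
      0 := by
  rw [sum_subset (range_subset_range.2 (Nat.succ_le_succ (min_le_right _ l))),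
    sum_range_neg_one_pow_mul_choose_mul_add_choose, if_neg hl]
  intro j hjl hjk
  rw [mem_range] at hjl hjk
  rw [Nat.choose_eq_zero_of_lt (by omega), Nat.cast_zero, mul_zero, zero_mul]

theorem aCoef_succ_eq (d n l : ℕ) :
    aCoef (d + 1) n l = 4 ^ l * l.factorial / (n - l).factorial * (d + l).choose d := by
  rw [aCoef, Nat.cast_choose ℚ (Nat.le_add_right d l), Nat.add_sub_cancel_left,
    show l + (d + 1) - 1 = d + l by omega, Nat.add_sub_cancel]
  field_simp

theorem aCoef_summand_eq (d n l j : ℕ) (hjl : j ≤ l) (hln : l ≤ n) :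
    aCoef (d + 1) n (l - j) * ((d + 1).choose j : ℚ) * 4 ^ j * (-1 : ℚ) ^ j *
        (((n - l + j).factorial : ℚ) / ((n - l).factorial : ℚ)) *
        ((l.factorial : ℚ) / ((l - j).factorial : ℚ)) =
      4 ^ l * l.factorial / (n - l).factorial *
        ((-1) ^ j * (d + 1).choose j * (d + (l - j)).choose d) := by
  rw [aCoef_succ_eq, show n - (l - j) = n - l + j by omega, ← pow_sub_mul_pow 4 hjl]
  field_simp

/-- For `k ≥ 1` and `n ≥ 0`, the sequence `a_l = 4^l (l+k-1)!/((n-l)!(k-1)!)` satisfies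
`∑_{j=0}^{min(k,l)} a_{l-j} C(k,j) 4^j (-1)^j ((n-l+j)!/(n-l)!) (l!/(l-j)!) = 0` for all
`1 ≤ l ≤ n`, together with `a_0 = 1/n!`. -/
theorem stmt10 (k n : ℕ) (hk : 1 ≤ k) :
    (∀ l : ℕ, 1 ≤ l → l ≤ n →
      ∑ j ∈ Finset.range (min k l + 1),
        aCoef k n (l - j) * (k.choose j : ℚ) * 4 ^ j * (-1 : ℚ) ^ j *
          (((n - l + j).factorial : ℚ) / ((n - l).factorial : ℚ)) *
          ((l.factorial : ℚ) / ((l - j).factorial : ℚ)) = 0) ∧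
    aCoef k n 0 = 1 / (n.factorial : ℚ) := by
  obtain ⟨d, rfl⟩ := Nat.exists_eq_add_of_le' hk
  refine ⟨fun l hl hln => ?_, by simp [aCoef_succ_eq]⟩
  have hsummand : ∀ j ∈ range (min (d + 1) l + 1), _ := fun j hj =>
    aCoef_summand_eq d n l j (by rw [mem_range] at hj; omega) hln
  rw [sum_congr rfl hsummand, ← mul_sum,
    sum_range_min_neg_one_pow_mul_choose_mul_add_choose_eq_zero d l (by omega), mul_zero]
end
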